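/- For every integer k ≥ 1 there exists a constant K_k > 0 such that for all α ∈ (0, 1] and all ψ ∈ (0, 3π/4], the k-th derivative of F_α with respect to ψ satisfies |F_α^{(k)}(ψ)| ≤ K_k · α^{(1−k)/2}. -/

import Mathlib

/-!
Writing `(4πm/ψ) sinh(cψ) = 4πm · c · (sinh w / w)` with `c = 4πm/α` and `w = cψ`, each term of
`F_α` extends to an entire function of `ψ`, since the difference quotient `sinh w / w` is entire.
On the disc `|z| ≤ 7π/8` the `m`-th term is at most `(2 + 16π²) e^{-m}`, uniformly in
`α ∈ (0, 1]`: the Gaussian factor `e^{-4π²m²/α}` beats the growth `e^{7π²m/(2α)}` of `cosh` and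
`sinh` there. So the complexified `F_α` is holomorphic and bounded uniformly in `α` on the open
disc of radius `7π/8`, and Cauchy's estimate on the discs of radius `π/16` around the points
`ψ ≤ 3π/4` bounds each derivative by a constant independent of `α`, while `α^{(1-k)/2} ≥ 1`.
-/

open Real

/-- The correction factor appearing in the Poisson-resummed form of the SU(2) heat
kernel: `F_α(ψ) = 1 + Σ_{n≥1} e^{-4π²n²/α} (2 cosh(4πnψ/α) - (4πn/ψ) sinh(4πnψ/α))`. -/
noncomputable def Fcorr (α ψ : ℝ) : ℝ :=
  1 + ∑' n : ℕ, Real.exp (-4 * π ^ 2 * ((n : ℝ) + 1) ^ 2 / α) *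
    (2 * Real.cosh (4 * π * ((n : ℝ) + 1) * ψ / α) -
      (4 * π * ((n : ℝ) + 1) / ψ) * Real.sinh (4 * π * ((n : ℝ) + 1) * ψ / α))

open Metric

namespace Complex

lemma norm_cosh_le_exp_norm (z : ℂ) : ‖cosh z‖ ≤ Real.exp ‖z‖ := by
  have h := norm_add_le (exp z) (exp (-z))
  rw [← two_cosh, norm_mul, Complex.norm_two] at h
  have h₁ := norm_exp_le_exp_norm z
  have h₂ := norm_exp_le_exp_norm (-z)
  rw [norm_neg] at h₂
  linarith

lemma differentiable_dslope_sinh : Differentiable ℂ (dslope sinh 0) := by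
  rw [← differentiableOn_univ]
  exact (differentiableOn_dslope Filter.univ_mem).2 differentiable_sinh.differentiableOn

lemma norm_dslope_sinh_le (z : ℂ) : ‖dslope sinh 0 z‖ ≤ Real.exp ‖z‖ := by
  rcases eq_or_ne z 0 with rfl | hz
  · simp [deriv_sinh]
  rw [dslope_of_ne _ hz, slope_def_field, sub_zero, norm_div, div_le_iff₀ (norm_pos_iff.2 hz)]
  have hcosh : ∀ u ∈ closedBall (0 : ℂ) ‖z‖, ‖deriv sinh u‖ ≤ Real.exp ‖z‖ := fun u hu => by
    rw [deriv_sinh]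
    exact (norm_cosh_le_exp_norm u).trans (Real.exp_le_exp.2 (mem_closedBall_zero_iff.1 hu))
  simpa using (convex_closedBall (0 : ℂ) ‖z‖).norm_image_sub_le_of_norm_deriv_le
    (fun _ _ => differentiable_sinh.differentiableAt) hcosh
    (mem_closedBall_self (norm_nonneg z)) (mem_closedBall_zero_iff.2 le_rfl)

end Complex

/-- The term of `Fcorr α` with `n + 1 = m`, as an entire function of `ψ`. -/
noncomputable def corrTerm (α m : ℝ) (z : ℂ) : ℂ :=
  Real.exp (-4 * π ^ 2 * m ^ 2 / α) *
    (2 * Complex.cosh (4 * π * m / α * z) -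
      4 * π * m * (4 * π * m / α) * dslope Complex.sinh 0 (4 * π * m / α * z))

noncomputable def corrComplex (α : ℝ) (z : ℂ) : ℂ :=
  1 + ∑' n : ℕ, corrTerm α (n + 1) z

lemma corrTerm_ofReal {α m x : ℝ} (hα : 0 < α) (hm : 0 < m) (hx : 0 < x) :
    corrTerm α m x = (Real.exp (-4 * π ^ 2 * m ^ 2 / α) *
      (2 * Real.cosh (4 * π * m * x / α) -
        (4 * π * m / x) * Real.sinh (4 * π * m * x / α)) : ℝ) := by
  have hα' : (α : ℂ) ≠ 0 := by exact_mod_cast hα.ne'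
  have hx' : (x : ℂ) ≠ 0 := by exact_mod_cast hx.ne'
  have hw : (4 * π * m / α * x : ℂ) ≠ 0 := by norm_cast; positivity
  rw [corrTerm, dslope_of_ne _ hw, slope_def_field, Complex.sinh_zero, sub_zero, sub_zero]
  push_cast
  field_simp

lemma Fcorr_eq_re_corrComplex {α x : ℝ} (hα : 0 < α) (hx : 0 < x) :
    Fcorr α x = (corrComplex α x).re := by
  rw [corrComplex, tsum_congr fun n => corrTerm_ofReal hα n.cast_add_one_pos hx,
    ← Complex.ofReal_tsum]
  simp [Fcorr]

lemma differentiable_corrTerm (α m : ℝ) : Differentiable ℂ (corrTerm α m) := by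
  have := Complex.differentiable_dslope_sinh
  unfold corrTerm
  fun_prop


lemma norm_corrTerm_le {α m : ℝ} (hα : 0 < α) (hm : 0 ≤ m) (z : ℂ) :
    ‖corrTerm α m z‖ ≤ Real.exp (-4 * π ^ 2 * m ^ 2 / α) * (2 + 16 * π ^ 2 * m ^ 2 / α) *
      Real.exp (4 * π * m * ‖z‖ / α) := by
  set w : ℂ := 4 * π * m / α * z
  have hw : ‖w‖ = 4 * π * m * ‖z‖ / α := by
    simp only [w, norm_mul, norm_div, Complex.norm_real, Complex.norm_ofNat, Real.norm_of_nonneg hm,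
      Real.norm_of_nonneg pi_pos.le, Real.norm_of_nonneg hα.le]
    ring
  have hc : ‖(4 * π * m * (4 * π * m / α) : ℂ)‖ = 16 * π ^ 2 * m ^ 2 / α := by
    norm_cast
    rw [Real.norm_of_nonneg (by positivity)]
    ring
  calc ‖corrTerm α m z‖
      ≤ Real.exp (-4 * π ^ 2 * m ^ 2 / α) *
          (2 * ‖Complex.cosh w‖ + 16 * π ^ 2 * m ^ 2 / α * ‖dslope Complex.sinh 0 w‖) := by
        rw [corrTerm, norm_mul, Complex.norm_real, Real.norm_of_nonneg (exp_pos _).le]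
        gcongr
        refine (norm_sub_le _ _).trans_eq ?_
        rw [norm_mul, norm_mul, Complex.norm_two, hc]
    _ ≤ Real.exp (-4 * π ^ 2 * m ^ 2 / α) *
          (2 * Real.exp ‖w‖ + 16 * π ^ 2 * m ^ 2 / α * Real.exp ‖w‖) := by
        gcongr
        · exact Complex.norm_cosh_le_exp_norm w
        · exact Complex.norm_dslope_sinh_le w
    _ = _ := by rw [hw]; ring

lemma gaussian_mul_exp_le {α m r : ℝ} (hα : 0 < α) (hα1 : α ≤ 1) (hm : 1 ≤ m)
    (hr : r ≤ 7 * π / 8) :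
    Real.exp (-4 * π ^ 2 * m ^ 2 / α) * (2 + 16 * π ^ 2 * m ^ 2 / α) *
      Real.exp (4 * π * m * r / α) ≤ (2 + 16 * π ^ 2) * Real.exp (-m) := by
  set X := m ^ 2 / α with hX
  have hmX : m ≤ X := by rw [hX, le_div_iff₀ hα]; nlinarith
  have hπ : 4 ≤ π ^ 2 := by nlinarith [pi_gt_three]
  have hexponent : -4 * π ^ 2 * m ^ 2 / α + 4 * π * m * r / α ≤ -(π ^ 2 / 2) * X := by
    have hmα : m / α ≤ X := div_le_div_of_nonneg_right (by nlinarith) hα.le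
    have : 4 * π * m * r / α ≤ 4 * π * m * (7 * π / 8) / α := by gcongr
    have : 4 * π * m * (7 * π / 8) / α = 7 / 2 * π ^ 2 * (m / α) := by ring
    have : -4 * π ^ 2 * m ^ 2 / α = -4 * π ^ 2 * X := by ring
    nlinarith
  have hpoly : 2 + 16 * π ^ 2 * m ^ 2 / α ≤ (2 + 16 * π ^ 2) * Real.exp X := by
    have hXexp : X ≤ Real.exp X := by linarith [add_one_le_exp X]
    calc 2 + 16 * π ^ 2 * m ^ 2 / α = 2 + 16 * π ^ 2 * X := by ring
      _ ≤ (2 + 16 * π ^ 2) * X := by nlinarith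
      _ ≤ (2 + 16 * π ^ 2) * Real.exp X := by gcongr
  calc Real.exp (-4 * π ^ 2 * m ^ 2 / α) * (2 + 16 * π ^ 2 * m ^ 2 / α) *
        Real.exp (4 * π * m * r / α)
      = (2 + 16 * π ^ 2 * m ^ 2 / α) * Real.exp (-4 * π ^ 2 * m ^ 2 / α + 4 * π * m * r / α) := by
        rw [exp_add]; ring
    _ ≤ (2 + 16 * π ^ 2) * Real.exp X * Real.exp (-(π ^ 2 / 2) * X) := by gcongr
    _ = (2 + 16 * π ^ 2) * Real.exp ((1 - π ^ 2 / 2) * X) := by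
        rw [mul_assoc, ← exp_add]; ring_nf
    _ ≤ (2 + 16 * π ^ 2) * Real.exp (-m) := by gcongr; nlinarith

lemma norm_corrTerm_le_exp_neg {α m : ℝ} (hα : 0 < α) (hα1 : α ≤ 1) (hm : 1 ≤ m) {z : ℂ}
    (hz : ‖z‖ ≤ 7 * π / 8) : ‖corrTerm α m z‖ ≤ (2 + 16 * π ^ 2) * Real.exp (-m) :=
  (norm_corrTerm_le hα (by linarith) z).trans (gaussian_mul_exp_le hα hα1 hm hz)

lemma summable_exp_neg_succ : Summable fun n : ℕ => Real.exp (-((n : ℝ) + 1)) := by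
  simpa using (summable_nat_add_iff 1).2 Real.summable_exp_neg_nat

section corrComplex

variable {α : ℝ} (hα : 0 < α) (hα1 : α ≤ 1)
include hα hα1

lemma differentiableOn_corrComplex : DifferentiableOn ℂ (corrComplex α) (ball 0 (7 * π / 8)) :=
  (differentiableOn_const 1).add <| Complex.differentiableOn_tsum_of_summable_norm
    (summable_exp_neg_succ.mul_left (2 + 16 * π ^ 2))
    (fun _ => (differentiable_corrTerm α _).differentiableOn) isOpen_ball
    fun _ _ hz => norm_corrTerm_le_exp_neg hα hα1 (by simp) (mem_ball_zero_iff.1 hz).le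

lemma norm_corrComplex_le {z : ℂ} (hz : ‖z‖ ≤ 7 * π / 8) :
    ‖corrComplex α z‖ ≤ 1 + ∑' n : ℕ, (2 + 16 * π ^ 2) * Real.exp (-((n : ℝ) + 1)) := by
  refine (norm_add_le _ _).trans ?_
  rw [norm_one]
  gcongr
  exact tsum_of_norm_bounded (summable_exp_neg_succ.mul_left _).hasSum
    fun n => norm_corrTerm_le_exp_neg hα hα1 (by simp) hz

end corrComplex

theorem iteratedDeriv_eqOn_re {F : ℂ → ℂ} {U : Set ℂ} (hU : IsOpen U)
    (hF : DifferentiableOn ℂ F U) {f : ℝ → ℝ} {s : Set ℝ} (hs : IsOpen s)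
    (hsU : Set.MapsTo ((↑) : ℝ → ℂ) s U) (hfF : Set.EqOn f (fun x : ℝ => (F x).re) s) (k : ℕ) :
    Set.EqOn (iteratedDeriv k f) (fun x : ℝ => (iteratedDeriv k F x).re) s := by
  induction k with
  | zero => simpa using hfF
  | succ k ih =>
    intro x hx
    have hFk : DifferentiableAt ℂ (iteratedDeriv k F) x := by
      rw [iteratedDeriv_eq_iterate]
      exact ((hF.analyticOnNhd hU).iterated_deriv k x (hsU hx)).differentiableAt
    rw [iteratedDeriv_succ, (Filter.eventuallyEq_of_mem (hs.mem_nhds hx) ih).deriv_eq,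
      iteratedDeriv_succ]
    exact hFk.hasDerivAt.real_of_complex.deriv

/-- For every `k ≥ 1` there is `K_k > 0` such that the `k`-th derivative of
`F_α` in `ψ` satisfies `|F_α^{(k)}(ψ)| ≤ K_k · α^{(1-k)/2}` for all `α ∈ (0,1]`
and `ψ ∈ (0, 3π/4]`. -/
theorem stmt11 (k : ℕ) (hk : 1 ≤ k) :
    ∃ K > (0 : ℝ), ∀ α ∈ Set.Ioc (0 : ℝ) 1, ∀ ψ ∈ Set.Ioc (0 : ℝ) (3 * π / 4),
      |iteratedDeriv k (Fcorr α) ψ| ≤ K * α ^ ((1 - (k : ℝ)) / 2) := by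
  set M := 1 + ∑' n : ℕ, (2 + 16 * π ^ 2) * Real.exp (-((n : ℝ) + 1))
  refine ⟨k.factorial * M / (π / 16) ^ k, by positivity, ?_⟩
  rintro α ⟨hα, hα1⟩ ψ ⟨hψ, hψ34⟩
  have hdisc : closedBall (ψ : ℂ) (π / 16) ⊆ ball 0 (7 * π / 8) :=
    closedBall_subset_ball' <| by
      rw [Complex.dist_eq, sub_zero, Complex.norm_of_nonneg hψ.le]; linarith
  have hcauchy : ‖iteratedDeriv k (corrComplex α) ψ‖ ≤ k.factorial * M / (π / 16) ^ k :=
    Complex.norm_iteratedDeriv_le_of_forall_mem_sphere_norm_le k (by positivity)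
      ((differentiableOn_corrComplex hα hα1).diffContOnCl_ball hdisc) fun z hz =>
        norm_corrComplex_le hα hα1 (mem_ball_zero_iff.1 (hdisc (sphere_subset_closedBall hz))).le
  have hre : iteratedDeriv k (Fcorr α) ψ = (iteratedDeriv k (corrComplex α) ψ).re :=
    iteratedDeriv_eqOn_re isOpen_ball (differentiableOn_corrComplex hα hα1) isOpen_Ioo
      (fun x hx => by rw [mem_ball_zero_iff, Complex.norm_of_nonneg hx.1.le]; exact hx.2)
      (fun x hx => Fcorr_eq_re_corrComplex hα hx.1) k ⟨hψ, by linarith [pi_pos]⟩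
  have hpow : 1 ≤ α ^ ((1 - (k : ℝ)) / 2) :=
    one_le_rpow_of_pos_of_le_one_of_nonpos hα hα1 <| by
      linarith [(Nat.one_le_cast.2 hk : (1 : ℝ) ≤ k)]
  calc |iteratedDeriv k (Fcorr α) ψ| ≤ ‖iteratedDeriv k (corrComplex α) ψ‖ :=
        hre ▸ Complex.abs_re_le_norm _
    _ ≤ k.factorial * M / (π / 16) ^ k := hcauchy
    _ ≤ k.factorial * M / (π / 16) ^ k * α ^ ((1 - (k : ℝ)) / 2) :=
        le_mul_of_one_le_right (by positivity) hpow
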